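/- arXiv:2310.01754 — 6 statements merged into one kernel-verified Lean document; each statement's English description precedes it below -/
import Mathlib

section
/- Let m > 1, 0 ≤ s < r < ∞, 0 ≤ γ < ∞, and let I = {t : s < t ≤ r}. Suppose f : I → (0,∞) satisfies, for every t ∈ I, limsup_{u → t⁻} f(u) ≤ f(t) and f(t) ≤ f(r) + γ ∫_t^r u⁻¹ f(u)^{1-1/m} du. Then for every t ∈ I, f(t) ≤ (1 + (γ/m) f(r)^{-1/m} log(r/t))^m · f(r). -/
open Filter Set MeasureTheory
open scoped Topology

/-!
For `A > f r`, the function `B(t) = (A ^ (1/m) + (γ/m) log (r/t)) ^ m` solves the integral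
inequality with equality and with `f r` replaced by `A`, i.e.
`B t = A + γ ∫_t^r u⁻¹ B(u) ^ (1 - 1/m) du`. Since `x ↦ x ^ (1 - 1/m)` is monotone, `f < B` on
`(t, r)` forces `f t ≤ f r + (B t - A) < B t`, and left upper semicontinuity propagates the strict
inequality to a left neighbourhood of `t`. A leftward continuity induction gives `f < B` on
`(s, r]`; letting `A ↓ f r` yields the bound.
-/

theorem forall_mem_Ioc_of_forall_nhdsLT {α : Type*} [ConditionallyCompleteLinearOrder α]
    [TopologicalSpace α] [OrderTopology α] {P : α → Prop} {s r : α}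
    (h : ∀ t ∈ Ioc s r, (∀ u ∈ Ioo t r, P u) → P t ∧ ∀ᶠ u in 𝓝[<] t, P u) :
    ∀ t ∈ Ioc s r, P t := by
  by_contra! hbad
  set B := {t ∈ Ioc s r | ¬P t}
  have hBbdd : BddAbove B := ⟨r, fun t ht => ht.1.2⟩
  obtain ⟨t, htB⟩ : B.Nonempty := hbad
  set b := sSup B
  have hb : b ∈ Ioc s r :=
    ⟨htB.1.1.trans_le (le_csSup hBbdd htB), csSup_le ⟨t, htB⟩ fun u hu => hu.1.2⟩
  have habove : ∀ u ∈ Ioo b r, P u := fun u hu => by_contra fun hPu =>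
    (le_csSup hBbdd ⟨⟨hb.1.trans hu.1, hu.2.le⟩, hPu⟩).not_gt hu.1
  obtain ⟨hPb, hleft⟩ := h b hb habove
  obtain ⟨l, hlb, hl⟩ := (mem_nhdsLT_iff_exists_Ioo_subset' hb.1).1 hleft
  have hBl : b ≤ l := csSup_le ⟨t, htB⟩ fun u hu => by
    by_contra! hlu
    rcases (le_csSup hBbdd hu).lt_or_eq with hub | rfl
    · exact hu.2 (hl ⟨hlu, hub⟩)
    · exact hu.2 hPb
  exact hBl.not_gt hlb

theorem Filter.eventually_lt_of_limsup_le_of_lt {α β : Type*} [TopologicalSpace α]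
    [ConditionallyCompleteLinearOrder β] [TopologicalSpace β] [OrderTopology β]
    [DenselyOrdered β] {l : Filter α} {x : α} {f φ : α → β} (hl : l ≤ 𝓝 x)
    (hbdd : IsBoundedUnder (· ≤ ·) l f) (hlimsup : limsup f l ≤ f x) (hx : f x < φ x)
    (hφ : ContinuousAt φ x) : ∀ᶠ y in l, f y < φ y := by
  obtain ⟨c, hfc, hcφ⟩ := exists_between hx
  filter_upwards [eventually_lt_of_limsup_lt (hlimsup.trans_lt hfc) hbdd,
    hl (hφ.eventually (lt_mem_nhds hcφ))] with y hfy hφy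
  exact hfy.trans hφy

theorem isBoundedUnder_le_setIntegral_Ioo {g : ℝ → ℝ} {s t r : ℝ}
    (hg : ∀ v ∈ Ioo s r, 0 ≤ g v) :
    IsBoundedUnder (· ≤ ·) (𝓝[Ioo s t] t) (fun u => ∫ v in Ioo u r, g v) := by
  by_cases h : ∃ u₀ ∈ Ioo s t, IntegrableOn g (Ioo u₀ r)
  · obtain ⟨u₀, hu₀, hint⟩ := h
    refine ⟨∫ v in Ioo u₀ r, g v, eventually_map.2 ?_⟩
    filter_upwards [nhdsWithin_le_nhds (Ioi_mem_nhds hu₀.2)] with u hu₀u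
    refine setIntegral_mono_set hint ?_ (Ioo_subset_Ioo_left (le_of_lt hu₀u)).eventuallyLE
    exact (ae_restrict_iff' measurableSet_Ioo).2
      (.of_forall fun v hv => hg v ⟨hu₀.1.trans hv.1, hv.2⟩)
  · push Not at h
    refine ⟨0, eventually_map.2 ?_⟩
    filter_upwards [self_mem_nhdsWithin] with u hu
    exact (integral_undef (h u hu)).le

noncomputable def logGronwallBound (m γ r A t : ℝ) : ℝ :=
  (A ^ (1 / m) + γ / m * Real.log (r / t)) ^ m

section logGronwallBound

variable {m γ r A t : ℝ}

theorem logGronwallBound_self (hm : m ≠ 0) (hA : 0 ≤ A) : logGronwallBound m γ r A r = A := by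
  rcases eq_or_ne r 0 with rfl | hr
  · simp [logGronwallBound, ← Real.rpow_mul hA, hm]
  · simp [logGronwallBound, div_self hr, ← Real.rpow_mul hA, hm]

theorem rpow_one_div_add_mul_log_div_pos (hm : 0 < m) (hγ : 0 ≤ γ) (hA : 0 < A) (ht : 0 < t)
    (htr : t ≤ r) :
    0 < A ^ (1 / m) + γ / m * Real.log (r / t) := by
  have : 0 ≤ Real.log (r / t) := Real.log_nonneg ((one_le_div ht).2 htr)
  positivity

theorem hasDerivAt_logGronwallBound (hm : 0 < m) (hγ : 0 ≤ γ) (hA : 0 < A) (ht : 0 < t)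
    (htr : t ≤ r) :
    HasDerivAt (logGronwallBound m γ r A)
      (-(γ * (t⁻¹ * logGronwallBound m γ r A t ^ (1 - 1 / m)))) t := by
  have hψ := rpow_one_div_add_mul_log_div_pos hm hγ hA ht htr
  have hr : 0 < r := ht.trans_le htr
  have hlog : HasDerivAt (fun u => Real.log (r / u)) (-t⁻¹) t := by
    have := ((hasDerivAt_inv ht.ne').const_mul r).log (by positivity)
    convert this using 1
    · simp only [div_eq_mul_inv]
    · rw [mul_neg, neg_div, mul_div_mul_left _ _ hr.ne']
      field_simp
  have := ((hlog.const_mul (γ / m)).const_add (A ^ (1 / m))).rpow_const (p := m) (.inl hψ.ne')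
  unfold logGronwallBound
  convert this using 1
  rw [← Real.rpow_mul hψ.le, mul_sub, mul_one, mul_one_div_cancel hm.ne']
  field_simp

theorem logGronwallBound_pos (hm : 0 < m) (hγ : 0 ≤ γ) (hA : 0 < A) (ht : 0 < t)
    (htr : t ≤ r) :
    0 < logGronwallBound m γ r A t :=
  Real.rpow_pos_of_pos (rpow_one_div_add_mul_log_div_pos hm hγ hA ht htr) m

theorem continuousOn_logGronwallIntegrand (hm : 0 < m) (hγ : 0 ≤ γ) (hA : 0 < A) :
    ContinuousOn (fun u => u⁻¹ * logGronwallBound m γ r A u ^ (1 - 1 / m)) (Ioc 0 r) := by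
  intro u hu
  have hB := (hasDerivAt_logGronwallBound hm hγ hA hu.1 hu.2).continuousAt
  refine ((continuousAt_inv₀ hu.1.ne').mul (hB.rpow_const ?_)).continuousWithinAt
  exact .inl (logGronwallBound_pos hm hγ hA hu.1 hu.2).ne'

theorem logGronwallBound_eq_add_integral (hm : 0 < m) (hγ : 0 ≤ γ) (hA : 0 < A) (ht : 0 < t)
    (htr : t ≤ r) :
    logGronwallBound m γ r A t =
      A + γ * ∫ u in Ioo t r, u⁻¹ * logGronwallBound m γ r A u ^ (1 - 1 / m) := by
  have hint : IntervalIntegrable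
      (fun u => -(γ * (u⁻¹ * logGronwallBound m γ r A u ^ (1 - 1 / m)))) volume t r :=
    (((continuousOn_logGronwallIntegrand hm hγ hA).mono
      fun u hu => ⟨ht.trans_le hu.1, hu.2⟩).intervalIntegrable_of_Icc htr).const_mul γ |>.neg
  have hFTC := intervalIntegral.integral_eq_sub_of_hasDerivAt (fun u hu =>
    hasDerivAt_logGronwallBound hm hγ hA (ht.trans_le (uIcc_of_le htr ▸ hu).1)
      (uIcc_of_le htr ▸ hu).2) hint
  rw [intervalIntegral.integral_neg, intervalIntegral.integral_const_mul,
    intervalIntegral.integral_of_le htr, integral_Ioc_eq_integral_Ioo,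
    logGronwallBound_self hm.ne' hA.le] at hFTC
  linarith

theorem logGronwallBound_eq_one_add_rpow_mul (hm : 0 < m) (hγ : 0 ≤ γ) (hA : 0 < A) (ht : 0 < t)
    (htr : t ≤ r) :
    logGronwallBound m γ r A t = (1 + γ / m * A ^ (-(1 / m)) * Real.log (r / t)) ^ m * A := by
  have hψ := rpow_one_div_add_mul_log_div_pos hm hγ hA ht htr
  have hfactor : 1 + γ / m * A ^ (-(1 / m)) * Real.log (r / t) =
      (A ^ (1 / m) + γ / m * Real.log (r / t)) * A ^ (-(1 / m)) := by
    rw [add_mul, ← Real.rpow_add hA, add_neg_cancel, Real.rpow_zero]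
    ring
  rw [hfactor, Real.mul_rpow hψ.le (Real.rpow_nonneg hA.le _), ← Real.rpow_mul hA.le,
    neg_mul, one_div_mul_cancel hm.ne', Real.rpow_neg_one, mul_assoc, inv_mul_cancel₀ hA.ne',
    mul_one, logGronwallBound]

theorem continuousAt_logGronwallBound (hm : 0 < m) (hA : 0 < A) :
    ContinuousAt (logGronwallBound m γ r · t) A :=
  ((continuousAt_id.rpow_const (.inl hA.ne')).add continuousAt_const).rpow_const (.inr hm.le)

variable {f : ℝ → ℝ}

theorem lt_logGronwallBound_of_forall_Ioo (hm : 1 < m) (hγ : 0 ≤ γ) (hA₀ : 0 < A)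
    (hA : f r < A) (ht : 0 < t) (htr : t ≤ r) (hf₀ : ∀ u ∈ Ioo t r, 0 ≤ f u)
    (hft : f t ≤ f r + γ * ∫ u in Ioo t r, u⁻¹ * f u ^ (1 - 1 / m))
    (hlt : ∀ u ∈ Ioo t r, f u < logGronwallBound m γ r A u) :
    f t < logGronwallBound m γ r A t := by
  have hm₀ : 0 < m := zero_lt_one.trans hm
  have hexp : 0 ≤ 1 - 1 / m := sub_nonneg.2 ((div_le_one hm₀).2 hm.le)
  have hintegral : ∫ u in Ioo t r, u⁻¹ * f u ^ (1 - 1 / m) ≤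
      ∫ u in Ioo t r, u⁻¹ * logGronwallBound m γ r A u ^ (1 - 1 / m) := by
    refine integral_mono_of_nonneg ((ae_restrict_iff' measurableSet_Ioo).2 (.of_forall
      fun u hu => ?_)) (((continuousOn_logGronwallIntegrand hm₀ hγ hA₀).mono fun u hu =>
        ⟨ht.trans_le hu.1, hu.2⟩).integrableOn_Icc.mono_set Ioo_subset_Icc_self)
      ((ae_restrict_iff' measurableSet_Ioo).2 (.of_forall fun u hu => ?_))
    · have := hf₀ u hu
      have := ht.trans hu.1
      simp only [Pi.zero_apply]
      positivity
    · exact mul_le_mul_of_nonneg_left (Real.rpow_le_rpow (hf₀ u hu) (hlt u hu).le hexp)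
        (inv_nonneg.2 (ht.trans hu.1).le)
  rw [logGronwallBound_eq_add_integral hm₀ hγ hA₀ ht htr]
  calc f t ≤ f r + γ * ∫ u in Ioo t r, u⁻¹ * f u ^ (1 - 1 / m) := hft
    _ ≤ f r + γ * ∫ u in Ioo t r, u⁻¹ * logGronwallBound m γ r A u ^ (1 - 1 / m) := by
      gcongr
    _ < _ := by gcongr

theorem lt_logGronwallBound {s : ℝ} (hm : 1 < m) (hs : 0 ≤ s) (hγ : 0 ≤ γ)
    (hpos : ∀ t ∈ Ioc s r, 0 < f t)
    (hlsc : ∀ t ∈ Ioc s r, limsup f (𝓝[Ioo s t] t) ≤ f t)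
    (hineq : ∀ t ∈ Ioc s r, f t ≤ f r + γ * ∫ u in Ioo t r, u⁻¹ * f u ^ (1 - 1 / m))
    (hA : f r < A) :
    ∀ t ∈ Ioc s r, f t < logGronwallBound m γ r A t := by
  refine forall_mem_Ioc_of_forall_nhdsLT fun t ht hlt => ?_
  have ht₀ : 0 < t := hs.trans_lt ht.1
  have hA₀ : 0 < A := (hpos r ⟨ht.1.trans_le ht.2, le_rfl⟩).trans hA
  have hft : f t < logGronwallBound m γ r A t :=
    lt_logGronwallBound_of_forall_Ioo hm hγ hA₀ hA ht₀ ht.2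
      (fun u hu => (hpos u ⟨ht.1.trans hu.1, hu.2.le⟩).le) (hineq t ht) hlt
  have hbdd : IsBoundedUnder (· ≤ ·) (𝓝[Ioo s t] t) f := by
    obtain ⟨b, hb⟩ := isBoundedUnder_le_setIntegral_Ioo (s := s) (t := t) (r := r)
      (g := fun u => u⁻¹ * f u ^ (1 - 1 / m)) fun v hv => by
        have := hpos v ⟨hv.1, hv.2.le⟩
        have := hs.trans_lt hv.1
        positivity
    refine ⟨f r + γ * b, eventually_map.2 ?_⟩
    filter_upwards [eventually_map.1 hb, self_mem_nhdsWithin] with u hub hu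
    exact (hineq u ⟨hu.1, hu.2.le.trans ht.2⟩).trans (by gcongr)
  refine ⟨hft, nhdsWithin_Ioo_eq_nhdsLT ht.1 ▸ ?_⟩
  exact eventually_lt_of_limsup_le_of_lt nhdsWithin_le_nhds hbdd (hlsc t ht) hft
    (hasDerivAt_logGronwallBound (zero_lt_one.trans hm) hγ hA₀ ht₀ ht.2).continuousAt

end logGronwallBound

/-- Lemma `lemma:calculus`: a logarithmic Gronwall-type estimate. -/
theorem stmt0 (m s r γ : ℝ) (f : ℝ → ℝ)
    (hm : 1 < m) (hs : 0 ≤ s) (hsr : s < r) (hγ : 0 ≤ γ)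
    (hpos : ∀ t ∈ Set.Ioc s r, 0 < f t)
    (hlsc : ∀ t ∈ Set.Ioc s r, limsup f (𝓝[Set.Ioo s t] t) ≤ f t)
    (hineq : ∀ t ∈ Set.Ioc s r,
      f t ≤ f r + γ * ∫ u in Set.Ioo t r, u⁻¹ * f u ^ (1 - 1 / m)) :
    ∀ t ∈ Set.Ioc s r,
      f t ≤ (1 + (γ / m) * f r ^ (-(1 / m)) * Real.log (r / t)) ^ m * f r := by
  intro t ht
  have hm₀ : 0 < m := zero_lt_one.trans hm
  have hfr : 0 < f r := hpos r ⟨hsr, le_rfl⟩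
  rw [← logGronwallBound_eq_one_add_rpow_mul hm₀ hγ hfr (hs.trans_lt ht.1) ht.2]
  refine ge_of_tendsto ((continuousAt_logGronwallBound hm₀ hfr).tendsto.mono_left
    (nhdsWithin_le_nhds (s := Ioi (f r)))) ?_
  filter_upwards [self_mem_nhdsWithin] with A hA
  exact (lt_logGronwallBound hm hs hγ hpos hlsc hineq hA t ht).le
end

section
/- Let j be a positive integer, and for i = 1,…,j let 0 ≤ c_i < ∞, 0 < α_i < ∞, 1 < β_i < ∞. Suppose φ : [0,∞) → ℝ is nonnegative and nonincreasing and satisfies φ(t) ≤ Σ_{i=1}^j c_i (t−s)^{−α_i} φ(s)^{β_i} whenever 0 ≤ s < t < ∞. Let γ = sup{2^{α_i/(β_i−1)} : i = 1,…,j} and d = 2·sup{(j c_i γ)^{1/α_i} φ(0)^{(β_i−1)/α_i} : i = 1,…,j}. Then: if d = 0 then φ(t) → 0 as t → 0⁺, and if d > 0 then φ(d) = 0. -/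
open Filter Set
open scoped Topology

/-- Geometric decay forces a nonnegative number to vanish. -/
lemma aux_geom_zero (x A g : ℝ) (hx : 0 ≤ x) (hg : 1 < g)
    (h : ∀ n : ℕ, x ≤ A * g ^ (-(n : ℝ))) : x = 0 := by
  by_contra hx0
  have hxpos : 0 < x := lt_of_le_of_ne hx (Ne.symm hx0)
  obtain ⟨n, hn⟩ := pow_unbounded_of_one_lt (A / x) hg
  have h1 := h n
  rw [Real.rpow_neg (by linarith), Real.rpow_natCast] at h1
  have hgn : (0:ℝ) < g ^ n := pow_pos (by linarith) n
  have h2 : x * g ^ n ≤ A := by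
    have := mul_le_mul_of_nonneg_right h1 hgn.le
    calc x * g ^ n ≤ A * (g ^ n)⁻¹ * g ^ n := this
      _ = A := by field_simp
  have h3 : A < g ^ n * x := (div_lt_iff₀ hxpos).mp hn
  nlinarith

/-- Stampacchia-type iteration lemma. -/
theorem stmt1 (j : ℕ) (hj : 0 < j) (c α β : Fin j → ℝ)
    (hc : ∀ i, 0 ≤ c i) (hα : ∀ i, 0 < α i) (hβ : ∀ i, 1 < β i)
    (φ : ℝ → ℝ)
    (hφ0 : ∀ t : ℝ, 0 ≤ t → 0 ≤ φ t)
    (hφmono : ∀ s t : ℝ, 0 ≤ s → s ≤ t → φ t ≤ φ s)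
    (hiter : ∀ s t : ℝ, 0 ≤ s → s < t →
      φ t ≤ ∑ i, c i * (t - s) ^ (-(α i)) * φ s ^ β i)
    (γ d : ℝ)
    (hγ : γ = ⨆ i, (2 : ℝ) ^ (α i / (β i - 1)))
    (hd : d = 2 * ⨆ i, ((j : ℝ) * c i * γ) ^ ((1 : ℝ) / α i) * φ 0 ^ ((β i - 1) / α i)) :
    (d = 0 → Tendsto φ (𝓝[>] (0 : ℝ)) (𝓝 0)) ∧ (0 < d → φ d = 0) := by
  haveI : Nonempty (Fin j) := ⟨⟨0, hj⟩⟩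
  have hjR : (0:ℝ) < (j:ℝ) := by exact_mod_cast hj
  have hφ00 : 0 ≤ φ 0 := hφ0 0 le_rfl
  -- γ facts
  have hbddγ : BddAbove (range fun i : Fin j => (2 : ℝ) ^ (α i / (β i - 1))) :=
    (Set.finite_range _).bddAbove
  have hγge : ∀ i, (2:ℝ) ^ (α i / (β i - 1)) ≤ γ := by
    intro i; rw [hγ]; exact le_ciSup hbddγ i
  have hγ1 : 1 < γ := by
    refine lt_of_lt_of_le ?_ (hγge ⟨0, hj⟩)
    have : (2:ℝ) ^ (0:ℝ) < 2 ^ (α ⟨0,hj⟩ / (β ⟨0,hj⟩ - 1)) :=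
      Real.rpow_lt_rpow_of_exponent_lt one_lt_two
        (div_pos (hα _) (by linarith [hβ ⟨0,hj⟩]))
    simpa using this
  have hγ0 : 0 < γ := by linarith
  -- the suprema family for d
  set F : Fin j → ℝ := fun i => ((j : ℝ) * c i * γ) ^ ((1 : ℝ) / α i) * φ 0 ^ ((β i - 1) / α i)
    with hF
  have hbddF : BddAbove (range F) := (Set.finite_range _).bddAbove
  have hFnn : ∀ i, 0 ≤ F i := fun i =>
    mul_nonneg (Real.rpow_nonneg (mul_nonneg (mul_nonneg hjR.le (hc i)) hγ0.le) _)
      (Real.rpow_nonneg hφ00 _)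
  constructor
  · -- d = 0 case
    intro hd0
    have hsup0 : (⨆ i, F i) = 0 := by
      have h2 : 2 * (⨆ i, F i) = 0 := by rw [← hd]; exact hd0
      linarith
    have hFzero : ∀ i, F i = 0 := by
      intro i
      have hle : F i ≤ 0 := hsup0 ▸ le_ciSup hbddF i
      linarith [hFnn i]
    have hzero : ∀ t : ℝ, 0 < t → φ t = 0 := by
      by_cases hA : φ 0 = 0
      · intro t ht
        have h1 := hφmono 0 t le_rfl ht.le
        have h2 := hφ0 t ht.le
        linarith [hA ▸ h1]
      · have hA0 : 0 < φ 0 := lt_of_le_of_ne hφ00 (Ne.symm hA)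
        have hall : ∀ i, c i = 0 := by
          intro i
          have hFi := hFzero i
          rcases mul_eq_zero.mp hFi with h | h
          · have hb : (j:ℝ) * c i * γ = 0 := by
              rw [Real.rpow_eq_zero (mul_nonneg (mul_nonneg hjR.le (hc i)) hγ0.le)
                (one_div_ne_zero (ne_of_gt (hα i)))] at h
              exact h
            rcases mul_eq_zero.mp hb with h' | h'
            · rcases mul_eq_zero.mp h' with h'' | h''
              · exact absurd h'' (ne_of_gt hjR)
              · exact h''
            · exact absurd h' (ne_of_gt hγ0)
          · exfalso
            rw [Real.rpow_eq_zero hφ00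
              (div_ne_zero (by linarith [hβ i]) (ne_of_gt (hα i)))] at h
            exact hA h
        intro t ht
        have h1 := hiter 0 t le_rfl ht
        simp only [hall, zero_mul, Finset.sum_const_zero] at h1
        linarith [hφ0 t ht.le]
    have heq : (fun _ : ℝ => (0:ℝ)) =ᶠ[𝓝[>] (0:ℝ)] φ := by
      filter_upwards [self_mem_nhdsWithin] with t ht
      exact (hzero t ht).symm
    exact Tendsto.congr' heq tendsto_const_nhds
  · -- 0 < d case
    intro hdpos
    by_cases hA : φ 0 = 0
    · have h1 := hφmono 0 d le_rfl hdpos.le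
      have h2 := hφ0 d hdpos.le
      linarith [hA ▸ h1]
    have hA0 : 0 < φ 0 := lt_of_le_of_ne hφ00 (Ne.symm hA)
    have hdF : ∀ i, F i ≤ d / 2 := by
      intro i
      have : F i ≤ ⨆ i, F i := le_ciSup hbddF i
      rw [hd]; linarith
    have hd2 : (0:ℝ) < d / 2 := by linarith
    -- the key per-index estimate
    have hkey : ∀ i, c i * (d/2) ^ (-(α i)) * φ 0 ^ (β i - 1) ≤ 1 / ((j:ℝ) * γ) := by
      intro i
      rcases (hc i).lt_or_eq with hci | hci
      · -- c i > 0
        have hX : (0:ℝ) < (j:ℝ) * c i * γ := mul_pos (mul_pos hjR hci) hγ0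
        have hφβ : (0:ℝ) < φ 0 ^ (β i - 1) := Real.rpow_pos_of_pos hA0 _
        have hFi : (0:ℝ) < F i :=
          mul_pos (Real.rpow_pos_of_pos hX _) (Real.rpow_pos_of_pos hA0 _)
        have hFα : F i ^ (α i) = (j:ℝ) * c i * γ * φ 0 ^ (β i - 1) := by
          rw [hF]
          rw [Real.mul_rpow (Real.rpow_nonneg hX.le _) (Real.rpow_nonneg hφ00 _),
            ← Real.rpow_mul hX.le, ← Real.rpow_mul hφ00]
          rw [one_div, inv_mul_cancel₀ (ne_of_gt (hα i)), Real.rpow_one,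
            div_mul_cancel₀ _ (ne_of_gt (hα i))]
        have hmono : (d/2) ^ (-(α i)) ≤ (F i) ^ (-(α i)) :=
          Real.rpow_le_rpow_of_nonpos hFi (hdF i) (by linarith [hα i])
        have hFneg : (F i) ^ (-(α i)) = ((j:ℝ) * c i * γ * φ 0 ^ (β i - 1))⁻¹ := by
          rw [Real.rpow_neg hFi.le, hFα]
        calc c i * (d/2) ^ (-(α i)) * φ 0 ^ (β i - 1)
            ≤ c i * (F i) ^ (-(α i)) * φ 0 ^ (β i - 1) := by
              apply mul_le_mul_of_nonneg_right _ hφβ.le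
              exact mul_le_mul_of_nonneg_left hmono hci.le
          _ = 1 / ((j:ℝ) * γ) := by
              rw [hFneg]
              field_simp
      · -- c i = 0
        rw [← hci]
        have hpos : (0:ℝ) < 1 / ((j:ℝ) * γ) := div_pos one_pos (mul_pos hjR hγ0)
        simpa using hpos.le
    -- the iteration
    have hbase2 : ∀ n : ℕ, (0:ℝ) < (2:ℝ) ^ (-(n:ℝ)) := fun n =>
      Real.rpow_pos_of_pos two_pos _
    have hle1 : ∀ n : ℕ, (2:ℝ) ^ (-(n:ℝ)) ≤ 1 := fun n =>
      Real.rpow_le_one_of_one_le_of_nonpos one_le_two (neg_nonpos.mpr n.cast_nonneg)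
    have H : ∀ n : ℕ, φ (d * (1 - (2:ℝ) ^ (-(n:ℝ)))) ≤ φ 0 * γ ^ (-(n:ℝ)) := by
      intro n
      induction n with
      | zero => norm_num
      | succ n ih =>
        set s := d * (1 - (2:ℝ) ^ (-(n:ℝ))) with hs
        set t := d * (1 - (2:ℝ) ^ (-((n:ℝ)+1))) with ht
        have hcast : ((n+1 : ℕ) : ℝ) = (n:ℝ) + 1 := by push_cast; ring
        have h2step : (2:ℝ) ^ (-((n:ℝ)+1)) * 2 = (2:ℝ) ^ (-(n:ℝ)) := by
          rw [← Real.rpow_add_one two_ne_zero]; norm_num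
        have hsnn : 0 ≤ s := by
          have := hle1 n
          rw [hs]; nlinarith
        have hst : s < t := by
          rw [hs, ht]
          have h1 : (2:ℝ) ^ (-((n:ℝ)+1)) < (2:ℝ) ^ (-(n:ℝ)) :=
            Real.rpow_lt_rpow_of_exponent_lt one_lt_two (by linarith)
          nlinarith
        have hts : t - s = (d/2) * (2:ℝ) ^ (-(n:ℝ)) := by
          rw [hs, ht]; nlinarith [h2step]
        have htspos : 0 < t - s := by linarith
        have hiter1 := hiter s t hsnn hst
        -- per-term bound
        have hterm : ∀ i, c i * (t - s) ^ (-(α i)) * φ s ^ β i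
            ≤ φ 0 * γ ^ (-((n:ℝ)+1)) / (j:ℝ) := by
          intro i
          have hβ1 : (0:ℝ) < β i - 1 := by linarith [hβ i]
          have hφs : 0 ≤ φ s := hφ0 s hsnn
          have hstep1 : φ s ^ β i ≤ (φ 0 * γ ^ (-(n:ℝ))) ^ β i :=
            Real.rpow_le_rpow hφs ih (by linarith [hβ i])
          have hexp : (t - s) ^ (-(α i))
              = (d/2) ^ (-(α i)) * (2:ℝ) ^ ((n:ℝ) * α i) := by
            rw [hts, Real.mul_rpow hd2.le (hbase2 n).le,
              ← Real.rpow_mul (by norm_num : (0:ℝ) ≤ 2)]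
            congr 1
            ring
          have hPexp : (φ 0 * γ ^ (-(n:ℝ))) ^ β i
              = φ 0 ^ (β i - 1) * φ 0 * γ ^ (-(n:ℝ) * β i) := by
            rw [Real.mul_rpow hφ00 (Real.rpow_nonneg hγ0.le _),
              ← Real.rpow_mul hγ0.le]
            rw [show φ 0 ^ β i = φ 0 ^ (β i - 1 + 1) from by rw [sub_add_cancel],
              Real.rpow_add_one (ne_of_gt hA0)]
          -- key power inequality: 2^(n α) ≤ γ^(n (β - 1))
          have hpow : (2:ℝ) ^ ((n:ℝ) * α i) ≤ γ ^ ((n:ℝ) * (β i - 1)) := by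
            have h1 : (2:ℝ) ^ (α i) ≤ γ ^ (β i - 1) := by
              have h2 := Real.rpow_le_rpow (Real.rpow_nonneg (by norm_num) _)
                (hγge i) hβ1.le
              rwa [← Real.rpow_mul (by norm_num : (0:ℝ) ≤ 2),
                div_mul_cancel₀ _ (ne_of_gt hβ1)] at h2
            calc (2:ℝ) ^ ((n:ℝ) * α i) = ((2:ℝ) ^ (α i)) ^ n := by
                  rw [← Real.rpow_natCast ((2:ℝ) ^ (α i)) n,
                    ← Real.rpow_mul (by norm_num : (0:ℝ) ≤ 2)]
                  congr 1; ring
              _ ≤ (γ ^ (β i - 1)) ^ n :=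
                  pow_le_pow_left₀ (Real.rpow_nonneg (by norm_num) _) h1 n
              _ = γ ^ ((n:ℝ) * (β i - 1)) := by
                  rw [← Real.rpow_natCast (γ ^ (β i - 1)) n, ← Real.rpow_mul hγ0.le]
                  congr 1; ring
          have hmix : (2:ℝ) ^ ((n:ℝ) * α i) * γ ^ (-(n:ℝ) * β i)
              ≤ γ ^ (-((n:ℝ)+1)) * γ := by
            have hγpow : (0:ℝ) < γ ^ ((n:ℝ) * (β i - 1)) := Real.rpow_pos_of_pos hγ0 _
            have hsplit : γ ^ (-(n:ℝ) * β i)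
                = (γ ^ ((n:ℝ) * (β i - 1)))⁻¹ * γ ^ (-(n:ℝ)) := by
              rw [← Real.rpow_neg hγ0.le, ← Real.rpow_add hγ0]
              congr 1; ring
            have hsplit2 : γ ^ (-((n:ℝ)+1)) * γ = γ ^ (-(n:ℝ)) := by
              rw [← Real.rpow_add_one (ne_of_gt hγ0)]
              congr 1; ring
            have h1 : (2:ℝ) ^ ((n:ℝ) * α i) * (γ ^ ((n:ℝ) * (β i - 1)))⁻¹ ≤ 1 := by
              rw [← div_eq_mul_inv, div_le_one hγpow]
              exact hpow
            rw [hsplit, hsplit2, ← mul_assoc]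
            exact mul_le_of_le_one_left (Real.rpow_pos_of_pos hγ0 _).le h1
          calc c i * (t - s) ^ (-(α i)) * φ s ^ β i
              ≤ c i * (t - s) ^ (-(α i)) * (φ 0 * γ ^ (-(n:ℝ))) ^ β i := by
                apply mul_le_mul_of_nonneg_left hstep1
                exact mul_nonneg (hc i) (Real.rpow_nonneg htspos.le _)
            _ = (c i * (d/2) ^ (-(α i)) * φ 0 ^ (β i - 1))
                * (φ 0 * ((2:ℝ) ^ ((n:ℝ) * α i) * γ ^ (-(n:ℝ) * β i))) := by
                rw [hexp, hPexp]; ring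
            _ ≤ (1 / ((j:ℝ) * γ)) * (φ 0 * (γ ^ (-((n:ℝ)+1)) * γ)) := by
                have hnn1 : 0 ≤ φ 0 * ((2:ℝ) ^ ((n:ℝ) * α i) * γ ^ (-(n:ℝ) * β i)) :=
                  mul_nonneg hA0.le (mul_nonneg (Real.rpow_nonneg (by norm_num) _)
                    (Real.rpow_nonneg hγ0.le _))
                have h2 : φ 0 * ((2:ℝ) ^ ((n:ℝ) * α i) * γ ^ (-(n:ℝ) * β i))
                    ≤ φ 0 * (γ ^ (-((n:ℝ)+1)) * γ) :=
                  mul_le_mul_of_nonneg_left hmix hA0.le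
                exact mul_le_mul (hkey i) h2 hnn1
                  (le_of_lt (div_pos one_pos (mul_pos hjR hγ0)))
            _ = φ 0 * γ ^ (-((n:ℝ)+1)) / (j:ℝ) := by
                field_simp
        have hsum : ∑ i, c i * (t - s) ^ (-(α i)) * φ s ^ β i
            ≤ φ 0 * γ ^ (-((n:ℝ)+1)) := by
          calc ∑ i, c i * (t - s) ^ (-(α i)) * φ s ^ β i
              ≤ ∑ _i : Fin j, φ 0 * γ ^ (-((n:ℝ)+1)) / (j:ℝ) :=
                Finset.sum_le_sum (fun i _ => hterm i)
            _ = φ 0 * γ ^ (-((n:ℝ)+1)) := by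
                rw [Finset.sum_const, Finset.card_univ, Fintype.card_fin, nsmul_eq_mul]
                field_simp
        rw [hcast]
        exact le_trans hiter1 hsum
    -- conclude φ d = 0
    have hfinal : ∀ n : ℕ, φ d ≤ φ 0 * γ ^ (-(n:ℝ)) := by
      intro n
      refine le_trans (hφmono _ _ ?_ ?_) (H n)
      · nlinarith [hle1 n]
      · nlinarith [hbase2 n]
    exact aux_geom_zero (φ d) (φ 0) γ (hφ0 d hdpos.le) hγ1 hfinal
end

section
/- Suppose 1 ≤ m < ∞, 0 ≤ s < r < ∞, 0 ≤ β < ∞, I = {t : s < t ≤ r}, and f : I → ℝ is a nonnegative function satisfying, for every t ∈ I, limsup_{u → t⁻} f(u) ≤ f(t) ≤ f(r) + β ∫_t^r f(u)^{1−1/m} du (with the convention 0⁰ = 1). Then f(t)^{1/m} ≤ f(r)^{1/m} + (β/m)(r−t) for every t ∈ I. -/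
open Filter Set MeasureTheory
open scoped Topology

/-!
Compare `f` with `g u = (a + b (r - u)) ^ m` for `a ^ m > f r` and `b > β / m`. Since
`g T = a ^ m + m b ∫_T^r g ^ (1 - 1/m)`, the function `g` strictly dominates the right-hand side of
the integral inequality. If `g ≤ f` somewhere on `[t, r]`, left upper semicontinuity of `f` makes
the supremum `T` of these points one of them; but `f < g` on `(T, r]`, so the integral inequality
at `T` gives `f T < g T`. Hence `f < g` on `[t, r]`, and letting `a ↓ f(r) ^ (1/m)`, `b ↓ β / m`
gives the bound.
-/

theorem le_limsup_of_tendsto_of_frequently_le {ι α : Type*} [ConditionallyCompleteLinearOrder α]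
    [TopologicalSpace α] [OrderTopology α] [DenselyOrdered α] {l : Filter ι} {f g : ι → α} {y : α}
    (hg : Tendsto g l (𝓝 y)) (hf : IsBoundedUnder (· ≤ ·) l f) (hfreq : ∃ᶠ u in l, g u ≤ f u) :
    y ≤ limsup f l := by
  refine le_of_forall_lt_imp_le_of_dense fun z hz => ?_
  refine le_limsup_of_frequently_le ?_ hf
  exact (hfreq.and_eventually (hg.eventually (eventually_gt_nhds hz))).mono
    fun u hu => hu.2.le.trans hu.1

theorem lt_on_Icc_of_backward_step {f g : ℝ → ℝ} {t₀ r : ℝ}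
    (hg : ∀ t ∈ Ioc t₀ r, ContinuousWithinAt g (Iio t) t)
    (hbdd : BddAbove (f '' Ioc t₀ r))
    (hf : ∀ t ∈ Ioc t₀ r, limsup f (𝓝[<] t) ≤ f t)
    (hstep : ∀ T ∈ Icc t₀ r, (∀ u ∈ Ioc T r, f u < g u) → f T < g T) :
    ∀ u ∈ Icc t₀ r, f u < g u := by
  by_contra! hA
  set A := {u ∈ Icc t₀ r | g u ≤ f u}
  have hAne : A.Nonempty := hA
  have hAbdd : BddAbove A := bddAbove_Icc.mono fun _ hu => hu.1
  set T := sSup A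
  have hT : T ∈ Icc t₀ r := by
    obtain ⟨u, hu⟩ := hAne
    exact ⟨hu.1.1.trans (le_csSup hAbdd hu), csSup_le ⟨u, hu⟩ fun _ hv => hv.1.2⟩
  have hgfT : g T ≤ f T := by
    have hfreq := (isLUB_csSup hAne hAbdd).frequently_mem hAne
    rw [← Iio_insert, nhdsWithin_insert, frequently_sup, frequently_pure] at hfreq
    rcases hfreq with hTA | hfreq
    · exact hTA.2
    obtain ⟨u, huA, huT⟩ := (hfreq.and_eventually self_mem_nhdsWithin).exists
    have hT' : T ∈ Ioc t₀ r := ⟨huA.1.1.trans_lt huT, hT.2⟩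
    obtain ⟨M, hM⟩ := hbdd
    have hbddT : IsBoundedUnder (· ≤ ·) (𝓝[<] T) f :=
      ⟨M, eventually_map.2 <| mem_of_superset (Ioo_mem_nhdsLT hT'.1) fun v hv =>
        hM ⟨v, ⟨hv.1, hv.2.le.trans hT.2⟩, rfl⟩⟩
    exact (le_limsup_of_tendsto_of_frequently_le (hg T hT') hbddT
      (hfreq.mono fun _ hv => hv.2)).trans (hf T hT')
  refine (hstep T hT fun u hu => ?_).not_ge hgfT
  by_contra! hgf
  exact (le_csSup hAbdd ⟨⟨hT.1.trans hu.1.le, hu.2⟩, hgf⟩).not_gt hu.1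

theorem mul_integral_rpow_affine {m a b T r : ℝ} (hm : 0 < m) (hT : T ≤ r) :
    m * b * ∫ u in Ioo T r, (a + b * (r - u)) ^ (m - 1) = (a + b * (r - T)) ^ m - a ^ m := by
  rcases eq_or_ne b 0 with rfl | hb
  · simp
  rw [← integral_Ioc_eq_integral_Ioo, ← intervalIntegral.integral_of_le hT]
  have := intervalIntegral.integral_comp_sub_mul (fun x => x ^ (m - 1)) hb (a + b * r)
    (a := T) (b := r)
  simp only [integral_rpow (Or.inl (by linarith : -1 < m - 1)), sub_add_cancel, smul_eq_mul] at this
  rw [show (fun u => (a + b * (r - u)) ^ (m - 1)) = fun u => (a + b * r - b * u) ^ (m - 1) by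
    ext; ring_nf, this]
  field_simp
  ring_nf

theorem bddAbove_image_of_le_add_integral {f h : ℝ → ℝ} {C β t r : ℝ} (hβ : 0 ≤ β)
    (hh : IntegrableOn h (Ioo t r)) (hh0 : ∀ u ∈ Ioo t r, 0 ≤ h u)
    (hf : ∀ u ∈ Ioc t r, f u ≤ C + β * ∫ v in Ioo u r, h v) :
    BddAbove (f '' Ioc t r) := by
  refine ⟨C + β * ∫ v in Ioo t r, h v, ?_⟩
  rintro _ ⟨u, hu, rfl⟩
  refine (hf u hu).trans (add_le_add_right (mul_le_mul_of_nonneg_left ?_ hβ) _)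
  exact setIntegral_mono_set hh ((ae_restrict_iff' measurableSet_Ioo).2 (.of_forall hh0))
    (Ioo_subset_Ioo_left hu.1.le).eventuallyLE

theorem lt_rpow_of_le_add_integral {f : ℝ → ℝ} {m β a b t₀ r : ℝ} (hm : 1 ≤ m) (hβ : 0 ≤ β)
    (ha : 0 ≤ a) (hb : 0 ≤ b) (hβb : β ≤ m * b) (hfr : f r < a ^ m)
    (hnonneg : ∀ u ∈ Ioc t₀ r, 0 ≤ f u) (hbdd : BddAbove (f '' Ioc t₀ r))
    (hlsc : ∀ u ∈ Ioc t₀ r, limsup f (𝓝[<] u) ≤ f u)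
    (hineq : ∀ u ∈ Icc t₀ r, f u ≤ f r + β * ∫ v in Ioo u r, f v ^ (1 - 1 / m)) :
    ∀ u ∈ Icc t₀ r, f u < (a + b * (r - u)) ^ m := by
  have hm0 : 0 < m := one_pos.trans_le hm
  have hψ : ∀ u ≤ r, 0 ≤ a + b * (r - u) := fun u hu => by nlinarith
  have hcont : Continuous fun u => (a + b * (r - u)) ^ m :=
    (by fun_prop : Continuous fun u => a + b * (r - u)).rpow_const fun _ => Or.inr hm0.le
  refine lt_on_Icc_of_backward_step (fun _ _ => hcont.continuousWithinAt) hbdd hlsc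
    fun T hT hlt => ?_
  have hint_le :
      ∫ v in Ioo T r, f v ^ (1 - 1 / m) ≤ ∫ v in Ioo T r, (a + b * (r - v)) ^ (m - 1) := by
    refine integral_mono_of_nonneg ?_ ?_ ?_
    · filter_upwards [ae_restrict_mem measurableSet_Ioo] with v hv
      exact Real.rpow_nonneg (hnonneg v ⟨hT.1.trans_lt hv.1, hv.2.le⟩) _
    · exact ((by fun_prop : Continuous fun u => a + b * (r - u)).rpow_const
        fun _ => Or.inr (sub_nonneg.2 hm)).integrableOn_Icc.mono_set Ioo_subset_Icc_self
    · filter_upwards [ae_restrict_mem measurableSet_Ioo] with v hv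
      calc f v ^ (1 - 1 / m) ≤ ((a + b * (r - v)) ^ m) ^ (1 - 1 / m) :=
            Real.rpow_le_rpow (hnonneg v ⟨hT.1.trans_lt hv.1, hv.2.le⟩)
              (hlt v ⟨hv.1, hv.2.le⟩).le (sub_nonneg.2 ((div_le_one hm0).2 hm))
        _ = (a + b * (r - v)) ^ (m - 1) := by
            rw [← Real.rpow_mul (hψ v hv.2.le)]
            congr 1
            field_simp
  have hint_nonneg : 0 ≤ ∫ v in Ioo T r, (a + b * (r - v)) ^ (m - 1) :=
    setIntegral_nonneg measurableSet_Ioo fun v hv => Real.rpow_nonneg (hψ v hv.2.le) _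
  calc f T ≤ f r + β * ∫ v in Ioo T r, f v ^ (1 - 1 / m) := hineq T hT
    _ ≤ f r + m * b * ∫ v in Ioo T r, (a + b * (r - v)) ^ (m - 1) :=
        add_le_add_right ((mul_le_mul_of_nonneg_left hint_le hβ).trans
          (mul_le_mul_of_nonneg_right hβb hint_nonneg)) _
    _ < a ^ m + m * b * ∫ v in Ioo T r, (a + b * (r - v)) ^ (m - 1) := by linarith
    _ = (a + b * (r - T)) ^ m := by rw [mul_integral_rpow_affine hm0 hT.2]; ring

theorem le_add_mul_of_forall_lt {x A B d : ℝ} (h : ∀ a > A, ∀ b > B, x ≤ a + b * d) :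
    x ≤ A + B * d := by
  have hlim : Tendsto (fun ε => (A + ε) + (B + ε) * d) (𝓝[>] 0) (𝓝 (A + B * d)) := by
    have : Continuous fun ε : ℝ => (A + ε) + (B + ε) * d := by fun_prop
    simpa using (this.tendsto 0).mono_left nhdsWithin_le_nhds
  exact ge_of_tendsto hlim (eventually_nhdsWithin_of_forall fun ε (hε : 0 < ε) =>
    h _ (lt_add_of_pos_right A hε) _ (lt_add_of_pos_right B hε))

theorem stmt2_general (m s r β : ℝ) (f : ℝ → ℝ)
    (hm : 1 ≤ m) (hβ : 0 ≤ β)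
    (hnonneg : ∀ t ∈ Set.Ioc s r, 0 ≤ f t)
    (hlsc : ∀ t ∈ Set.Ioc s r, limsup f (𝓝[Set.Ioo s t] t) ≤ f t)
    (hineq : ∀ t ∈ Set.Ioc s r,
      f t ≤ f r + β * ∫ u in Set.Ioo t r, f u ^ (1 - 1 / m)) :
    ∀ t ∈ Set.Ioc s r, f t ^ (1 / m) ≤ f r ^ (1 / m) + (β / m) * (r - t) := by
  intro t ht
  have hm0 : 0 < m := one_pos.trans_le hm
  have hsub : Icc t r ⊆ Ioc s r := fun u hu => ⟨ht.1.trans_le hu.1, hu.2⟩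
  have hfr : 0 ≤ f r := hnonneg r (hsub ⟨ht.2, le_rfl⟩)
  by_cases hint : IntegrableOn (fun u => f u ^ (1 - 1 / m)) (Ioo t r)
  swap
  · have hle : f t ≤ f r := by
      simpa only [integral_undef hint, mul_zero, add_zero] using hineq t ht
    calc f t ^ (1 / m) ≤ f r ^ (1 / m) := Real.rpow_le_rpow (hnonneg t ht) hle (by positivity)
      _ ≤ _ := le_add_of_nonneg_right (mul_nonneg (div_nonneg hβ hm0.le) (sub_nonneg.2 ht.2))
  -- `limsup` in `ℝ` is junk for functions unbounded above, so `hlsc` is only usable once `f` is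
  -- known to be bounded.
  have hbdd := bddAbove_image_of_le_add_integral hβ hint
    (fun u hu => Real.rpow_nonneg (hnonneg u (hsub (Ioo_subset_Icc_self hu))) _)
    fun u hu => hineq u (hsub (Ioc_subset_Icc_self hu))
  have hlsc' : ∀ u ∈ Ioc t r, limsup f (𝓝[<] u) ≤ f u := fun u hu => by
    simpa only [nhdsWithin_Ioo_eq_nhdsLT (ht.1.trans hu.1)] using
      hlsc u (hsub (Ioc_subset_Icc_self hu))
  refine le_add_mul_of_forall_lt fun a ha b hb => ?_
  have ha0 : 0 ≤ a := (Real.rpow_nonneg hfr _).trans ha.le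
  have hfra : f r < a ^ m := by
    simpa only [one_div, Real.rpow_inv_rpow hfr hm0.ne'] using
      Real.rpow_lt_rpow (Real.rpow_nonneg hfr _) ha hm0
  have hlt := lt_rpow_of_le_add_integral hm hβ ha0 ((div_nonneg hβ hm0.le).trans hb.le)
    ((div_le_iff₀' hm0).1 hb.le) hfra (fun u hu => hnonneg u (hsub (Ioc_subset_Icc_self hu)))
    hbdd hlsc' (fun u hu => hineq u (hsub hu)) t ⟨le_rfl, ht.2⟩
  calc f t ^ (1 / m) ≤ ((a + b * (r - t)) ^ m) ^ (1 / m) :=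
        Real.rpow_le_rpow (hnonneg t ht) hlt.le (by positivity)
    _ = a + b * (r - t) := by
        rw [one_div, Real.rpow_rpow_inv _ hm0.ne']
        nlinarith [(div_nonneg hβ hm0.le).trans hb.le, ht.2]

/-- ODE comparison lemma `lemma:ode_comparison`. -/
theorem stmt2 (m s r β : ℝ) (f : ℝ → ℝ)
    (hm : 1 ≤ m) (hs : 0 ≤ s) (hsr : s < r) (hβ : 0 ≤ β)
    (hnonneg : ∀ t ∈ Set.Ioc s r, 0 ≤ f t)
    (hlsc : ∀ t ∈ Set.Ioc s r, limsup f (𝓝[Set.Ioo s t] t) ≤ f t)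
    (hineq : ∀ t ∈ Set.Ioc s r,
      f t ≤ f r + β * ∫ u in Set.Ioo t r, f u ^ (1 - 1 / m)) :
    ∀ t ∈ Set.Ioc s r, f t ^ (1 / m) ≤ f r ^ (1 / m) + (β / m) * (r - t) :=
  stmt2_general m s r β f hm hβ hnonneg hlsc hineq
end

section
/- Suppose 1 ≤ p < q < r ≤ ∞, 0 < α < 1, 1/q = α/p + (1−α)/r, φ is a measure on a set X which is nonatomic, f is a real-valued φ-measurable function, 0 < λ < ∞, and B is a φ-measurable set with φ(B) ≤ λ^{1/(1/q−1/r)} ≤ φ(X) < ∞. Then the L^q(φ) norm of f is at most 2 λ^{1−1/α} times the L^p norm of f restricted to X∖B plus 2λ times the L^r(φ) norm of f. -/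
/-!
On `B`, Hölder's inequality gives `‖f‖_{L^q(B)} ≤ φ(B)^{1/q-1/r} ‖f‖_r ≤ λ ‖f‖_r`. On `Bᶜ`,
log-convexity of `L^p` norms gives `‖f‖_q ≤ ‖f‖_p^α ‖f‖_r^{1-α}`, and weighted AM-GM applied
to `(λ^{1-1/α} ‖f‖_p)^α (λ ‖f‖_r)^{1-α}` (the powers of `λ` cancel) bounds this by
`λ^{1-1/α} ‖f‖_p + λ ‖f‖_r`. The triangle inequality for `f = f 1_B + f 1_{Bᶜ}` combines
the two bounds.
-/

open MeasureTheory Set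
open scoped ENNReal

namespace ENNReal

theorem rpow_mul_rpow_one_sub_le_add {α : ℝ} (hα0 : 0 ≤ α) (hα1 : α ≤ 1) (a b : ℝ≥0∞) :
    a ^ α * b ^ (1 - α) ≤ a + b :=
  calc a ^ α * b ^ (1 - α) ≤ (a + b) ^ α * (a + b) ^ (1 - α) := by
        gcongr
        exacts [le_self_add, le_add_self]
    _ = a + b := by rw [← rpow_add_of_nonneg _ _ hα0 (sub_nonneg.2 hα1), add_sub_cancel, rpow_one]

theorem rpow_mul_rpow_one_sub_le_ofReal_mul_add {α t : ℝ} (hα0 : 0 < α) (hα1 : α ≤ 1)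
    (ht : 0 < t) (a b : ℝ≥0∞) :
    a ^ α * b ^ (1 - α) ≤ ENNReal.ofReal (t ^ (1 - 1 / α)) * a + ENNReal.ofReal t * b := by
  have h1α : 0 ≤ 1 - α := sub_nonneg.2 hα1
  have hweights : ENNReal.ofReal (t ^ (1 - 1 / α)) ^ α * ENNReal.ofReal t ^ (1 - α) = 1 := by
    rw [ofReal_rpow_of_pos (Real.rpow_pos_of_pos ht _), ofReal_rpow_of_pos ht,
      ← Real.rpow_mul ht.le, ← ofReal_mul (Real.rpow_nonneg ht.le _), ← Real.rpow_add ht,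
      show (1 - 1 / α) * α + (1 - α) = 0 by field_simp; ring, Real.rpow_zero, ofReal_one]
  calc a ^ α * b ^ (1 - α)
      = (ENNReal.ofReal (t ^ (1 - 1 / α)) * a) ^ α * (ENNReal.ofReal t * b) ^ (1 - α) := by
        rw [mul_rpow_of_nonneg _ _ hα0.le, mul_rpow_of_nonneg _ _ h1α, mul_mul_mul_comm,
          hweights, one_mul]
    _ ≤ _ := rpow_mul_rpow_one_sub_le_add hα0.le hα1 _ _

theorem rpow_le_ofReal_of_le_ofReal_rpow_inv {x : ℝ≥0∞} {a t : ℝ} (ha : 0 ≤ a) (ht : 0 < t)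
    (h : x ≤ ENNReal.ofReal (a ^ t⁻¹)) : x ^ t ≤ ENNReal.ofReal a :=
  calc x ^ t ≤ ENNReal.ofReal (a ^ t⁻¹) ^ t := rpow_le_rpow h ht.le
    _ = ENNReal.ofReal a := by
      rw [ofReal_rpow_of_nonneg (Real.rpow_nonneg ha _) ht.le, ← Real.rpow_mul ha,
        inv_mul_cancel₀ ht.ne', Real.rpow_one]

theorem toReal_one_div_sub_one_div {q r : ℝ≥0∞} (hq : q ≠ 0) (hqr : q ≤ r) :
    (1 / q - 1 / r).toReal = 1 / q.toReal - 1 / r.toReal := by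
  have hq_inv : 1 / q ≠ ∞ := by simpa [one_div] using hq
  rw [toReal_sub_of_le (ENNReal.div_le_div_left hqr 1) hq_inv]
  simp only [one_div, toReal_inv]

theorem toReal_one_div_sub_one_div_pos {q r : ℝ≥0∞} (hq : q ≠ 0) (hqr : q < r) :
    0 < (1 / q - 1 / r).toReal := by
  have hlt : 1 / r < 1 / q := by simpa only [one_div] using ENNReal.inv_lt_inv.2 hqr
  exact toReal_pos (tsub_pos_of_lt hlt).ne' (ne_top_of_le_ne_top (by simpa using hq) tsub_le_self)

end ENNReal

namespace MeasureTheory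

variable {X E : Type*} [MeasurableSpace X] [NormedAddCommGroup E] {μ : Measure X} {f : X → E}

theorem eLpNorm_le_eLpNorm_rpow_mul_eLpNorm_rpow {p q r : ℝ≥0∞} {α : ℝ}
    (hα0 : 0 < α) (hα1 : α < 1)
    (hq : 1 / q = ENNReal.ofReal α / p + ENNReal.ofReal (1 - α) / r)
    (hf : AEStronglyMeasurable f μ) :
    eLpNorm f q μ ≤ eLpNorm f p μ ^ α * eLpNorm f r μ ^ (1 - α) := by
  have h1α : 0 < 1 - α := sub_pos.2 hα1
  have hα_ne : ENNReal.ofReal α ≠ 0 := by simpa using hα0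
  have h1α_ne : ENNReal.ofReal (1 - α) ≠ 0 := by simpa using h1α
  have hholder : ENNReal.HolderTriple (p / ENNReal.ofReal α) (r / ENNReal.ofReal (1 - α)) q :=
    ⟨by simpa only [one_div, ENNReal.inv_div (Or.inl ENNReal.ofReal_ne_top) (Or.inl hα_ne),
      ENNReal.inv_div (Or.inl ENNReal.ofReal_ne_top) (Or.inl h1α_ne)] using hq.symm⟩
  have hsplit : (fun x ↦ ‖f x‖ ^ α * ‖f x‖ ^ (1 - α)) = fun x ↦ ‖f x‖ := by
    funext x
    rw [← Real.rpow_add' (norm_nonneg _) (by norm_num), add_sub_cancel, Real.rpow_one]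
  have h := eLpNorm_le_eLpNorm_mul_eLpNorm_of_nnnorm (μ := μ)
    (hf.norm.aemeasurable.pow_const α).aestronglyMeasurable
    (hf.norm.aemeasurable.pow_const (1 - α)).aestronglyMeasurable (· * ·) 1
    (Filter.Eventually.of_forall fun x ↦ by rw [one_mul]; exact (nnnorm_mul _ _).le)
    (hpqr := hholder)
  rwa [hsplit, eLpNorm_norm, ENNReal.coe_one, one_mul, eLpNorm_norm_rpow f hα0,
    eLpNorm_norm_rpow f h1α, ENNReal.div_mul_cancel hα_ne ENNReal.ofReal_ne_top,
    ENNReal.div_mul_cancel h1α_ne ENNReal.ofReal_ne_top] at h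

theorem eLpNorm_restrict_le_measure_rpow_mul_eLpNorm {q r : ℝ≥0∞} (hqr : q ≤ r)
    (hf : AEStronglyMeasurable f μ) (s : Set X) :
    eLpNorm f q (μ.restrict s) ≤ μ s ^ (1 / q.toReal - 1 / r.toReal) * eLpNorm f r μ :=
  calc eLpNorm f q (μ.restrict s)
      ≤ eLpNorm f r (μ.restrict s) * μ.restrict s univ ^ (1 / q.toReal - 1 / r.toReal) :=
        eLpNorm_le_eLpNorm_mul_rpow_measure_univ hqr hf.restrict
    _ ≤ μ s ^ (1 / q.toReal - 1 / r.toReal) * eLpNorm f r μ := by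
        rw [Measure.restrict_apply_univ, mul_comm]
        gcongr
        exact Measure.restrict_le_self

theorem eLpNorm_le_ofReal_rpow_mul_eLpNorm_add_ofReal_mul_eLpNorm {p q r : ℝ≥0∞} {α t : ℝ}
    (hα0 : 0 < α) (hα1 : α < 1)
    (hq : 1 / q = ENNReal.ofReal α / p + ENNReal.ofReal (1 - α) / r)
    (hf : AEStronglyMeasurable f μ) (ht : 0 < t) :
    eLpNorm f q μ ≤
      ENNReal.ofReal (t ^ (1 - 1 / α)) * eLpNorm f p μ + ENNReal.ofReal t * eLpNorm f r μ :=
  (eLpNorm_le_eLpNorm_rpow_mul_eLpNorm_rpow hα0 hα1 hq hf).trans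
    (ENNReal.rpow_mul_rpow_one_sub_le_ofReal_mul_add hα0 hα1.le ht _ _)

theorem eLpNorm_restrict_le_ofReal_mul_eLpNorm {q r : ℝ≥0∞} (hq : q ≠ 0) (hqr : q < r)
    (hf : AEStronglyMeasurable f μ) {s : Set X} {t : ℝ} (ht : 0 ≤ t)
    (hs : μ s ≤ ENNReal.ofReal (t ^ ((1 / q - 1 / r).toReal⁻¹))) :
    eLpNorm f q (μ.restrict s) ≤ ENNReal.ofReal t * eLpNorm f r μ := by
  refine (eLpNorm_restrict_le_measure_rpow_mul_eLpNorm hqr.le hf s).trans ?_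
  rw [← ENNReal.toReal_one_div_sub_one_div hq hqr.le]
  gcongr
  exact ENNReal.rpow_le_ofReal_of_le_ofReal_rpow_inv ht
    (ENNReal.toReal_one_div_sub_one_div_pos hq hqr) hs

theorem eLpNorm_le_eLpNorm_restrict_add_eLpNorm_restrict_compl {q : ℝ≥0∞} (hq : 1 ≤ q)
    (hf : AEStronglyMeasurable f μ) {s : Set X} (hs : MeasurableSet s) :
    eLpNorm f q μ ≤ eLpNorm f q (μ.restrict s) + eLpNorm f q (μ.restrict sᶜ) :=
  calc eLpNorm f q μ = eLpNorm (s.indicator f + sᶜ.indicator f) q μ := by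
        rw [indicator_self_add_compl]
    _ ≤ eLpNorm (s.indicator f) q μ + eLpNorm (sᶜ.indicator f) q μ :=
        eLpNorm_add_le (hf.indicator hs) (hf.indicator hs.compl) hq
    _ = eLpNorm f q (μ.restrict s) + eLpNorm f q (μ.restrict sᶜ) := by
        rw [eLpNorm_indicator_eq_eLpNorm_restrict hs,
          eLpNorm_indicator_eq_eLpNorm_restrict hs.compl]

end MeasureTheory

theorem stmt3_general {X : Type*} [MeasurableSpace X] (φ : Measure X)
    (p q r : ℝ≥0∞) (α : ℝ)
    (hp : 1 ≤ p) (hpq : p < q) (hqr : q < r)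
    (hα0 : 0 < α) (hα1 : α < 1)
    (hq : 1 / q = ENNReal.ofReal α / p + ENNReal.ofReal (1 - α) / r)
    (f : X → ℝ) (hf : Measurable f)
    (lam : ℝ) (hlam : 0 < lam)
    (B : Set X) (hB : MeasurableSet B)
    (hB1 : φ B ≤ ENNReal.ofReal (lam ^ ((1 / q - 1 / r).toReal⁻¹))) :
    eLpNorm f q φ ≤
      ENNReal.ofReal (2 * lam ^ (1 - 1 / α)) * eLpNorm f p (φ.restrict Bᶜ) +
        ENNReal.ofReal (2 * lam) * eLpNorm f r φ := by
  have hq1 : 1 ≤ q := hp.trans hpq.le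
  set P := eLpNorm f p (φ.restrict Bᶜ)
  set R := eLpNorm f r φ
  set c := ENNReal.ofReal (lam ^ (1 - 1 / α))
  have hon_B : eLpNorm f q (φ.restrict B) ≤ ENNReal.ofReal lam * R :=
    eLpNorm_restrict_le_ofReal_mul_eLpNorm (zero_lt_one.trans_le hq1).ne' hqr
      hf.aestronglyMeasurable hlam.le hB1
  have hon_Bc : eLpNorm f q (φ.restrict Bᶜ) ≤ c * P + ENNReal.ofReal lam * R := by
    grw [eLpNorm_le_ofReal_rpow_mul_eLpNorm_add_ofReal_mul_eLpNorm hα0 hα1 hq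
      hf.aestronglyMeasurable hlam, eLpNorm_restrict_le f r φ Bᶜ]
  rw [ENNReal.ofReal_mul zero_le_two, ENNReal.ofReal_mul zero_le_two, ENNReal.ofReal_ofNat]
  calc eLpNorm f q φ ≤ eLpNorm f q (φ.restrict B) + eLpNorm f q (φ.restrict Bᶜ) :=
        eLpNorm_le_eLpNorm_restrict_add_eLpNorm_restrict_compl hq1 hf.aestronglyMeasurable hB
    _ ≤ ENNReal.ofReal lam * R + (c * P + ENNReal.ofReal lam * R) := add_le_add hon_B hon_Bc
    _ = c * P + 2 * ENNReal.ofReal lam * R := by ring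
    _ ≤ 2 * c * P + 2 * ENNReal.ofReal lam * R := by
        gcongr
        exact le_mul_of_one_le_left' one_le_two

/-- Interpolation lemma `lemma:basic_interpolation` for nonatomic measures. -/
theorem stmt3 {X : Type*} [MeasurableSpace X] (φ : Measure X)
    (hna : ∀ A : Set X, MeasurableSet A → 0 < φ A → φ A < ∞ →
      ∃ B ⊆ A, MeasurableSet B ∧ 0 < φ B ∧ φ B < φ A)
    (p q r : ℝ≥0∞) (α : ℝ)
    (hp : 1 ≤ p) (hpq : p < q) (hqr : q < r) (hr : r ≤ ∞)
    (hα0 : 0 < α) (hα1 : α < 1)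
    (hq : 1 / q = ENNReal.ofReal α / p + ENNReal.ofReal (1 - α) / r)
    (f : X → ℝ) (hf : Measurable f)
    (lam : ℝ) (hlam : 0 < lam)
    (B : Set X) (hB : MeasurableSet B)
    (hB1 : φ B ≤ ENNReal.ofReal (lam ^ ((1 / q - 1 / r).toReal⁻¹)))
    (hB2 : ENNReal.ofReal (lam ^ ((1 / q - 1 / r).toReal⁻¹)) ≤ φ univ)
    (hfin : φ univ < ∞) :
    eLpNorm f q φ ≤
      ENNReal.ofReal (2 * lam ^ (1 - 1 / α)) * eLpNorm f p (φ.restrict Bᶜ) +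
        ENNReal.ofReal (2 * lam) * eLpNorm f r φ :=
  stmt3_general φ p q r α hp hpq hqr hα0 hα1 hq f hf lam hlam B hB hB1
end

section
/- Suppose 0 < r < ∞, 0 < m < ∞, I = (0, r), j is a positive integer, f : I → ℝ is nonnegative, f_1,…,f_j : I → ℝ are nondecreasing with f(s) ≤ f_i(s) for all s ∈ I and i, 0 < λ ≤ 1, and liminf_{s → 0⁺} s^{−m} f(s) > 0. Then there exists s ∈ I with f_i(s) ≤ 2 λ^{−jm} f_i(λ s) for all i ∈ {1,…,j}. -/
open Filter Set
open scoped Topology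

/-- `lemma:radius_from_calculus`: choice of a good radius. -/
theorem stmt7 (r m : ℝ) (hr : 0 < r) (hm : 0 < m) (j : ℕ) (hj : 0 < j)
    (f : ℝ → ℝ) (F : Fin j → ℝ → ℝ)
    (hf0 : ∀ s ∈ Set.Ioo (0 : ℝ) r, 0 ≤ f s)
    (hmono : ∀ i, MonotoneOn (F i) (Set.Ioo (0 : ℝ) r))
    (hle : ∀ i, ∀ s ∈ Set.Ioo (0 : ℝ) r, f s ≤ F i s)
    (lam : ℝ) (hlam0 : 0 < lam) (hlam1 : lam ≤ 1)
    (hliminf : ∃ ε > (0 : ℝ), ∀ᶠ s in 𝓝[>] (0 : ℝ), ε ≤ s ^ (-m) * f s) :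
    ∃ s ∈ Set.Ioo (0 : ℝ) r, ∀ i, F i s ≤ 2 * lam ^ (-((j : ℝ) * m)) * F i (lam * s) := by
  by_contra hcon
  push_neg at hcon
  obtain ⟨ε, hε, hev⟩ := hliminf
  obtain ⟨δ, hδ, hsub⟩ := mem_nhdsGT_iff_exists_Ioo_subset.mp hev
  rw [Set.mem_Ioi] at hδ
  set c : ℝ := lam ^ (-((j : ℝ) * m)) with hc
  have hcpos : 0 < c := Real.rpow_pos_of_pos hlam0 _
  set s₀ : ℝ := min (r/2) (δ/2) with hs₀
  have hs₀pos : 0 < s₀ := lt_min (by linarith) (by linarith)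
  have hs₀r : s₀ < r := lt_of_le_of_lt (min_le_left _ _) (by linarith)
  have hs₀δ : s₀ < δ := lt_of_le_of_lt (min_le_right _ _) (by linarith)
  set g : ℕ → ℝ := fun k => lam ^ k * s₀ with hg
  have hgpos : ∀ k, 0 < g k := fun k => mul_pos (pow_pos hlam0 k) hs₀pos
  have hgle : ∀ k, g k ≤ s₀ := fun k => by
    have : lam ^ k ≤ 1 := pow_le_one₀ hlam0.le hlam1
    calc lam ^ k * s₀ ≤ 1 * s₀ := by nlinarith
    _ = s₀ := one_mul s₀
  have hgmem : ∀ k, g k ∈ Set.Ioo (0 : ℝ) r :=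
    fun k => ⟨hgpos k, lt_of_le_of_lt (hgle k) hs₀r⟩
  -- lower bound on f, hence on each F i, along the sequence
  have hflow : ∀ k, ε * (g k) ^ m ≤ f (g k) := by
    intro k
    have hmem : g k ∈ Set.Ioo (0 : ℝ) δ := ⟨hgpos k, lt_of_le_of_lt (hgle k) hs₀δ⟩
    have h1 : ε ≤ (g k) ^ (-m) * f (g k) := hsub hmem
    have h2 : (g k) ^ (-m) = ((g k) ^ m)⁻¹ := by
      rw [Real.rpow_neg (hgpos k).le]
    have hpm : 0 < (g k) ^ m := Real.rpow_pos_of_pos (hgpos k) m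
    rw [h2] at h1
    have h3 := mul_le_mul_of_nonneg_right h1 hpm.le
    have h4 : ((g k) ^ m)⁻¹ * f (g k) * (g k) ^ m = f (g k) := by field_simp
    rw [h4] at h3
    exact h3
  have hFlow : ∀ i k, ε * (g k) ^ m ≤ F i (g k) :=
    fun i k => (hflow k).trans (hle i _ (hgmem k))
  have hFpos : ∀ i k, 0 < F i (g k) := fun i k =>
    lt_of_lt_of_le (mul_pos hε (Real.rpow_pos_of_pos (hgpos k) m)) (hFlow i k)
  set P : ℕ → ℝ := fun k => ∏ i, F i (g k) with hP
  have hPpos : ∀ k, 0 < P k := fun k => Finset.prod_pos fun i _ => hFpos i k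
  -- one step
  have hstep : ∀ k, 2 * c * P (k + 1) ≤ P k := by
    intro k
    obtain ⟨i0, hi0⟩ := hcon (g k) (hgmem k)
    have hlg : lam * g k = g (k + 1) := by
      simp only [hg]; ring
    rw [hlg] at hi0
    have hmonoF : ∀ i, F i (g (k+1)) ≤ F i (g k) := by
      intro i
      refine hmono i (hgmem (k+1)) (hgmem k) ?_
      have : lam ^ (k+1) ≤ lam ^ k := pow_le_pow_of_le_one hlam0.le hlam1 (by omega)
      simp only [hg]
      nlinarith [hs₀pos]
    have e1 : P (k+1) = F i0 (g (k+1)) * ∏ i ∈ Finset.univ.erase i0, F i (g (k+1)) :=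
      (Finset.mul_prod_erase _ _ (Finset.mem_univ i0)).symm
    have e2 : P k = F i0 (g k) * ∏ i ∈ Finset.univ.erase i0, F i (g k) :=
      (Finset.mul_prod_erase _ _ (Finset.mem_univ i0)).symm
    rw [e1, e2, ← mul_assoc]
    refine mul_le_mul hi0.le ?_ ?_ (hFpos i0 k).le
    · exact Finset.prod_le_prod (fun i _ => (hFpos i (k+1)).le) (fun i _ => hmonoF i)
    · exact Finset.prod_nonneg fun i _ => (hFpos i (k+1)).le
  -- iterate
  have hiter : ∀ N, (2 * c) ^ N * P N ≤ P 0 := by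
    intro N
    induction N with
    | zero => simp
    | succ N ih =>
      calc (2 * c) ^ (N + 1) * P (N + 1) = (2 * c) ^ N * (2 * c * P (N + 1)) := by ring
      _ ≤ (2 * c) ^ N * P N := by
          have h2c : (0:ℝ) ≤ (2 * c) ^ N := by positivity
          nlinarith [hstep N, hPpos (N+1)]
      _ ≤ P 0 := ih
  -- lower bound on P N
  have hPlow : ∀ N, (ε * (g N) ^ m) ^ j ≤ P N := by
    intro N
    have := Finset.prod_le_prod (s := (Finset.univ : Finset (Fin j)))
      (f := fun _ => ε * (g N) ^ m) (g := fun i => F i (g N))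
      (fun i _ => by positivity) (fun i _ => hFlow i N)
    simpa using this
  -- combine: 2^N * K ≤ P 0 for all N
  set K : ℝ := ε ^ j * (s₀ ^ m) ^ j with hK
  have hKpos : 0 < K := by positivity
  have hmain : ∀ N, 2 ^ N * K ≤ P 0 := by
    intro N
    have h1 : (2 * c) ^ N * (ε * (g N) ^ m) ^ j ≤ P 0 := by
      calc (2 * c) ^ N * (ε * (g N) ^ m) ^ j ≤ (2 * c) ^ N * P N :=
            mul_le_mul_of_nonneg_left (hPlow N) (by positivity)
      _ ≤ P 0 := hiter N
    have hkey : (2 * c) ^ N * (ε * (g N) ^ m) ^ j = 2 ^ N * K := by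
      have hcN : c ^ N = lam ^ (-((j : ℝ) * m) * N) := by
        rw [hc, ← Real.rpow_natCast (lam ^ (-((j : ℝ) * m))) N,
          ← Real.rpow_mul hlam0.le]
      have hgNm : (g N) ^ m = lam ^ ((N : ℝ) * m) * s₀ ^ m := by
        rw [hg]
        simp only
        rw [Real.mul_rpow (by positivity) hs₀pos.le,
          ← Real.rpow_natCast lam N, ← Real.rpow_mul hlam0.le]
      have hj2 : (lam ^ ((N : ℝ) * m)) ^ j = lam ^ ((N : ℝ) * m * j) := by
        rw [← Real.rpow_natCast (lam ^ ((N : ℝ) * m)) j, ← Real.rpow_mul hlam0.le]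
      have hcancel : lam ^ (-((j : ℝ) * m) * N) * lam ^ ((N : ℝ) * m * j) = 1 := by
        rw [← Real.rpow_add hlam0]
        ring_nf
        exact Real.rpow_zero lam
      calc (2 * c) ^ N * (ε * (g N) ^ m) ^ j
          = 2 ^ N * (ε ^ j * (s₀ ^ m) ^ j) *
            (c ^ N * (lam ^ ((N : ℝ) * m)) ^ j) := by
            rw [hgNm]; ring
      _ = 2 ^ N * K := by rw [hcN, hj2, hcancel, hK, mul_one]
    linarith [hkey ▸ h1]
  obtain ⟨N, hN⟩ := pow_unbounded_of_one_lt (P 0 / K) (by norm_num : (1:ℝ) < 2)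
  have : P 0 < 2 ^ N * K := by
    rw [div_lt_iff₀ hKpos] at hN
    linarith
  linarith [hmain N]
end

section
/- Suppose 1 ≤ q ≤ p ≤ ∞, φ is a measure on X, G is a countable collection of φ-measurable functions from X to [0,∞], 1 ≤ γ < ∞, the cardinality of {g ∈ G : g(z) ≠ 0} is at most γ for φ-almost all z, and f(z) = Σ_{g ∈ G} g(z) for φ-almost all z. Then: if q < ∞, the L^p(φ) norm of f is at most γ (Σ_{g ∈ G} (L^p-norm of g)^q)^{1/q}; and if q = ∞, the L^p(φ) norm of f is at most γ sup({0} ∪ {L^p-norm of g : g ∈ G}). -/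
open MeasureTheory Set
open scoped ENNReal

/-- The `L^p` "norm" `φ_{(p)}(h)` of a `[0,∞]`-valued function:
`(∫ h^p dφ)^{1/p}` for `p < ∞` and the essential supremum for `p = ∞`. -/
noncomputable def lpNormE {X : Type*} [MeasurableSpace X] (φ : Measure X) (p : ℝ≥0∞)
    (h : X → ℝ≥0∞) : ℝ≥0∞ :=
  if p = ∞ then essSup h φ else (∫⁻ x, h x ^ p.toReal ∂φ) ^ (1 / p.toReal)

/-!
At almost every point at most `γ` of the values `g z` are nonzero, and each of them is bounded
by the `ℓ^q` norm `(∑ g z ^ q) ^ (1 / q)` (by `⨆ g, essSup g` when `q = ∞`), so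
`f ≤ γ (∑ g ^ q) ^ (1 / q)` almost everywhere. The `L^p` norm of `(∑ g ^ q) ^ (1 / q)` is the
`1 / q`-th power of the `L^(p / q)` norm of `∑ g ^ q`, and Minkowski's inequality in
`L^(p / q)`, available because `p / q ≥ 1`, bounds it by `(∑ ‖g‖_p ^ q) ^ (1 / q)`.
-/

namespace ENNReal

variable {ι : Type*}

theorem tsum_le_encard_support_mul {a : ι → ℝ≥0∞} {M : ℝ≥0∞} (ha : ∀ i, a i ≤ M) :
    ∑' i, a i ≤ (Function.support a).encard * M := by
  rcases (Function.support a).finite_or_infinite with hfin | hinf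
  · rw [tsum_eq_sum (s := hfin.toFinset) (by simp), hfin.encard_eq_coe_toFinset_card,
      ENat.toENNReal_coe, ← nsmul_eq_mul]
    exact Finset.sum_le_card_nsmul _ _ _ fun i _ => ha i
  · rcases eq_or_ne M 0 with rfl | hM
    · simp [nonpos_iff_eq_zero.mp (ha _)]
    · simp [hinf.encard_eq, ENNReal.top_mul hM]

theorem tsum_rpow_eq_iSup_sum_rpow {a : ι → ℝ≥0∞} {r : ℝ} (hr : 0 < r) :
    (∑' i, a i) ^ r = ⨆ s : Finset ι, (∑ i ∈ s, a i) ^ r := by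
  rw [ENNReal.tsum_eq_iSup_sum]
  exact (orderIsoRpow r hr).map_iSup _

end ENNReal

section LpNorm

variable {X : Type*} [MeasurableSpace X] {φ : Measure X} {p : ℝ≥0∞}

theorem lpNormE_top (h : X → ℝ≥0∞) : lpNormE φ ∞ h = essSup h φ := if_pos rfl

theorem lpNormE_eq_eLpNorm' (hp : p ≠ ∞) (h : X → ℝ≥0∞) :
    lpNormE φ p h = eLpNorm' h p.toReal φ := by
  simp [lpNormE, eLpNorm', hp]

theorem lpNormE_mono_ae {f g : X → ℝ≥0∞} (hfg : f ≤ᵐ[φ] g) : lpNormE φ p f ≤ lpNormE φ p g := by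
  rcases eq_or_ne p ∞ with rfl | hp
  · simpa only [lpNormE_top] using essSup_mono_ae hfg
  · simp only [lpNormE_eq_eLpNorm' hp]
    exact eLpNorm'_mono_enorm_ae ENNReal.toReal_nonneg hfg

theorem lpNormE_const_mul (hp : p ≠ 0) {c : ℝ≥0∞} (hc : c ≠ ∞) (h : X → ℝ≥0∞) :
    lpNormE φ p (fun z => c * h z) = c * lpNormE φ p h := by
  rcases eq_or_ne p ∞ with rfl | hp'
  · simp only [lpNormE_top, ENNReal.essSup_const_mul]
  · have hpr : 0 < p.toReal := ENNReal.toReal_pos hp hp'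
    simp only [lpNormE, hp', if_false, ENNReal.mul_rpow_of_nonneg _ _ hpr.le]
    rw [lintegral_const_mul' _ _ (ENNReal.rpow_ne_top_of_nonneg hpr.le hc),
      ENNReal.mul_rpow_of_nonneg _ _ (by positivity), ← ENNReal.rpow_mul,
      mul_one_div_cancel hpr.ne', ENNReal.rpow_one]

theorem ENNReal.eLpNorm'_rpow (g : X → ℝ≥0∞) (s : ℝ) {r : ℝ} (hr : 0 < r) :
    eLpNorm' (fun z => g z ^ r) s φ = eLpNorm' g (s * r) φ ^ r := by
  simpa only [enorm_eq_self] using eLpNorm'_enorm_rpow g s r hr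

end LpNorm

section Minkowski

variable {X : Type*} [MeasurableSpace X] {φ : Measure X} {ι : Type*} [Countable ι]

theorem ENNReal.eLpNorm'_tsum_le {h : ι → X → ℝ≥0∞} (hh : ∀ i, AEMeasurable (h i) φ) {r : ℝ}
    (hr : 1 ≤ r) : eLpNorm' (fun z => ∑' i, h i z) r φ ≤ ∑' i, eLpNorm' (h i) r φ := by
  have hr0 : 0 < r := zero_lt_one.trans_le hr
  have hsup : eLpNorm' (fun z => ∑' i, h i z) r φ =
      ⨆ s : Finset ι, eLpNorm' (∑ i ∈ s, h i) r φ := by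
    simp only [eLpNorm', enorm_eq_self, Finset.sum_apply, ENNReal.tsum_rpow_eq_iSup_sum_rpow hr0]
    rw [lintegral_iSup_directed (fun s => (s.aemeasurable_fun_sum fun i _ => hh i).pow_const r)
      (Monotone.directed_le fun s t hst z => by gcongr)]
    exact (ENNReal.orderIsoRpow (1 / r) (by positivity)).map_iSup _
  rw [hsup]
  exact iSup_le fun s => (eLpNorm'_sum_le (fun i _ => (hh i).aestronglyMeasurable) hr).trans
    (ENNReal.sum_le_tsum s)

theorem lpNormE_tsum_rpow_le {h : ι → X → ℝ≥0∞} (hh : ∀ i, Measurable (h i)) {p : ℝ≥0∞} {q : ℝ}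
    (hq : 0 < q) (hqp : ENNReal.ofReal q ≤ p) :
    lpNormE φ p (fun z => (∑' i, h i z ^ q) ^ (1 / q)) ≤
      (∑' i, lpNormE φ p (h i) ^ q) ^ (1 / q) := by
  rcases eq_or_ne p ∞ with rfl | hp
  · simp only [lpNormE_top]
    refine essSup_le_of_ae_le _ ?_
    filter_upwards [ae_all_iff.mpr fun i => ENNReal.ae_le_essSup (h i)] with z hz
    gcongr with i
    exact hz i
  have hqp' : q ≤ p.toReal := by
    simpa [ENNReal.ofReal_toReal hp, hq.le] using ENNReal.toReal_mono hp hqp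
  have hr : 1 ≤ p.toReal * (1 / q) := by rwa [mul_one_div, one_le_div hq]
  calc lpNormE φ p (fun z => (∑' i, h i z ^ q) ^ (1 / q))
      = eLpNorm' (fun z => ∑' i, h i z ^ q) (p.toReal * (1 / q)) φ ^ (1 / q) := by
        rw [lpNormE_eq_eLpNorm' hp, ENNReal.eLpNorm'_rpow _ _ (by positivity)]
    _ ≤ (∑' i, eLpNorm' (fun z => h i z ^ q) (p.toReal * (1 / q)) φ) ^ (1 / q) := by
        gcongr
        exact ENNReal.eLpNorm'_tsum_le (fun i => ((hh i).pow_const q).aemeasurable) hr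
    _ = (∑' i, lpNormE φ p (h i) ^ q) ^ (1 / q) := by
        simp only [lpNormE_eq_eLpNorm' hp, ENNReal.eLpNorm'_rpow _ _ hq, one_div_mul_cancel hq.ne',
          mul_assoc, mul_one]

end Minkowski

theorem tsum_apply_le_mul_of_encard_le {X : Type*} {G : Set (X → ℝ≥0∞)} {z : X} {c M : ℝ≥0∞}
    (hcard : ({g ∈ G | g z ≠ 0}).encard ≤ c) (hM : ∀ g : G, (g : X → ℝ≥0∞) z ≤ M) :
    ∑' g : G, (g : X → ℝ≥0∞) z ≤ c * M := by
  have hsupport : (Function.support fun g : G => (g : X → ℝ≥0∞) z).encard ≤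
      ({g ∈ G | g z ≠ 0}).encard :=
    encard_le_encard_of_injOn (fun g hg => ⟨g.2, hg⟩) Subtype.val_injective.injOn
  calc ∑' g : G, (g : X → ℝ≥0∞) z
      ≤ (Function.support fun g : G => (g : X → ℝ≥0∞) z).encard * M :=
        ENNReal.tsum_le_encard_support_mul hM
    _ ≤ c * M := by
        gcongr
        exact (ENat.toENNReal_le.mpr hsupport).trans hcard

theorem stmt12_general {X : Type*} [MeasurableSpace X] (φ : Measure X) (p q : ℝ≥0∞)
    (hq1 : 1 ≤ q) (hqp : q ≤ p)
    (G : Set (X → ℝ≥0∞)) (hGc : G.Countable) (hGm : ∀ g ∈ G, Measurable g)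
    (γ : ℝ)
    (hcard : ∀ᵐ z ∂φ, ({g ∈ G | g z ≠ 0}).encard ≤ ENNReal.ofReal γ)
    (f : X → ℝ≥0∞) (hf : ∀ᵐ z ∂φ, f z = ∑' g : G, (g : X → ℝ≥0∞) z) :
    (q ≠ ∞ → lpNormE φ p f ≤
      ENNReal.ofReal γ * (∑' g : G, lpNormE φ p (g : X → ℝ≥0∞) ^ q.toReal) ^ (1 / q.toReal)) ∧
    (q = ∞ → lpNormE φ p f ≤
      ENNReal.ofReal γ * ⨆ g : G, lpNormE φ p (g : X → ℝ≥0∞)) := by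
  have : Countable G := hGc.to_subtype
  have hf_le (M : X → ℝ≥0∞) (hM : ∀ᵐ z ∂φ, ∀ g : G, (g : X → ℝ≥0∞) z ≤ M z) :
      ∀ᵐ z ∂φ, f z ≤ ENNReal.ofReal γ * M z := by
    filter_upwards [hcard, hf, hM] with z hz hfz hMz
    exact hfz ▸ tsum_apply_le_mul_of_encard_le hz hMz
  refine ⟨fun hq => ?_, fun hq => ?_⟩
  · have hq0 : 0 < q.toReal := ENNReal.toReal_pos (zero_lt_one.trans_le hq1).ne' hq
    have hle_norm : ∀ z, ∀ g : G,
        (g : X → ℝ≥0∞) z ≤ (∑' g : G, (g : X → ℝ≥0∞) z ^ q.toReal) ^ (1 / q.toReal) :=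
      fun z g => by
        rw [← ENNReal.rpow_rpow_inv hq0.ne' ((g : X → ℝ≥0∞) z), one_div]
        gcongr
        exact ENNReal.le_tsum g
    calc lpNormE φ p f
        ≤ lpNormE φ p (fun z =>
            ENNReal.ofReal γ * (∑' g : G, (g : X → ℝ≥0∞) z ^ q.toReal) ^ (1 / q.toReal)) :=
          lpNormE_mono_ae (hf_le _ (ae_of_all _ hle_norm))
      _ ≤ _ := by
          rw [lpNormE_const_mul (zero_lt_one.trans_le (hq1.trans hqp)).ne' ENNReal.ofReal_ne_top]
          gcongr
          exact lpNormE_tsum_rpow_le (fun g : G => hGm g g.2) hq0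
            (by rwa [ENNReal.ofReal_toReal hq])
  · subst hq
    obtain rfl := top_le_iff.mp hqp
    simp only [lpNormE_top]
    refine essSup_le_of_ae_le _ (hf_le _ ?_)
    filter_upwards [ae_all_iff.mpr fun g : G => ENNReal.ae_le_essSup (g : X → ℝ≥0∞)] with z hz g
    exact (hz g).trans (le_iSup (fun g : G => essSup (g : X → ℝ≥0∞) φ) g)

/-- `miniremark:lpnorms`: an `ℓ^q`-type estimate for the `L^p` norm of a sum of
nonnegative functions with bounded overlap `γ`. -/
theorem stmt12 {X : Type*} [MeasurableSpace X] (φ : Measure X) (p q : ℝ≥0∞)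
    (hq1 : 1 ≤ q) (hqp : q ≤ p)
    (G : Set (X → ℝ≥0∞)) (hGc : G.Countable) (hGm : ∀ g ∈ G, Measurable g)
    (γ : ℝ) (hγ : 1 ≤ γ)
    (hcard : ∀ᵐ z ∂φ, ({g ∈ G | g z ≠ 0}).encard ≤ ENNReal.ofReal γ)
    (f : X → ℝ≥0∞) (hf : ∀ᵐ z ∂φ, f z = ∑' g : G, (g : X → ℝ≥0∞) z) :
    (q ≠ ∞ → lpNormE φ p f ≤
      ENNReal.ofReal γ * (∑' g : G, lpNormE φ p (g : X → ℝ≥0∞) ^ q.toReal) ^ (1 / q.toReal)) ∧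
    (q = ∞ → lpNormE φ p f ≤
      ENNReal.ofReal γ * ⨆ g : G, lpNormE φ p (g : X → ℝ≥0∞)) :=
  stmt12_general φ p q hq1 hqp G hGc hGm γ hcard f hf
end
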